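/- arXiv:1612.07402 — 3 statements merged into one kernel-verified Lean document; each statement's English description precedes it below -/
import Mathlib

section
/- Let b ≥ 1 and k be integers, ρ a real number, and (x_n)_{n≥0} a sequence of real numbers such that the increments |x_{n+1} - x_n| are uniformly bounded by some constant D. Then limsup_{n→+∞} (x_{bn+k} - bnρ) = +∞ if and only if limsup_{n→+∞} (x_n - nρ) = +∞. -/
open Filter

lemma aux_limsup_top_iff (f : ℕ → ℝ) :
    limsup (fun n : ℕ => ((f n : ℝ) : EReal)) atTop = ⊤ ↔ ∀ M : ℝ, ∃ᶠ n in atTop, M ≤ f n := by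
  constructor
  · intro h M
    have hlt : ((M : ℝ) : EReal) < limsup (fun n : ℕ => ((f n : ℝ) : EReal)) atTop := by
      rw [h]; exact EReal.coe_lt_top M
    have hfreq := frequently_lt_of_lt_limsup (isCobounded_le_of_bot) hlt
    exact hfreq.mono fun n hn => le_of_lt (by exact_mod_cast hn)
  · intro h
    rw [EReal.eq_top_iff_forall_lt]
    intro y
    have hle : ((y + 1 : ℝ) : EReal) ≤ limsup (fun n : ℕ => ((f n : ℝ) : EReal)) atTop := by
      apply le_limsup_of_frequently_le'
      exact (h (y + 1)).mono fun n hn => by exact_mod_cast hn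
    calc ((y : ℝ) : EReal) < ((y + 1 : ℝ) : EReal) := by exact_mod_cast lt_add_one y
      _ ≤ _ := hle

/-- Abstract version of Lemma 7.2: for a sequence with uniformly bounded increments,
`limsup (x_{bn+k} - b n ρ) = +∞` iff `limsup (x_n - n ρ) = +∞`. -/
theorem stmt0 (b k : ℤ) (hb : 1 ≤ b) (ρ : ℝ) (x : ℕ → ℝ)
    (hD : ∃ D : ℝ, 0 < D ∧ ∀ n : ℕ, |x (n + 1) - x n| ≤ D) :
    limsup (fun n : ℕ => ((x (b * n + k).toNat - (b * n : ℝ) * ρ : ℝ) : EReal)) atTop = ⊤ ↔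
    limsup (fun n : ℕ => ((x n - (n : ℝ) * ρ : ℝ) : EReal)) atTop = ⊤ := by
  obtain ⟨D, hD0, hDx⟩ := hD
  set y : ℕ → ℝ := fun n => x n - n * ρ with hy
  set E : ℝ := D + |ρ| with hE
  have hE0 : 0 < E := lt_of_lt_of_le hD0 (le_add_of_nonneg_right (abs_nonneg ρ))
  have hstep : ∀ n : ℕ, |y (n + 1) - y n| ≤ E := by
    intro n
    have : y (n + 1) - y n = (x (n + 1) - x n) - ρ := by
      simp only [hy]; push_cast; ring
    rw [this]
    calc |(x (n + 1) - x n) - ρ| ≤ |x (n + 1) - x n| + |ρ| := abs_sub _ _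
      _ ≤ D + |ρ| := by gcongr; exact hDx n
  have htel : ∀ a j : ℕ, |y (a + j) - y a| ≤ j * E := by
    intro a j
    induction j with
    | zero => simp
    | succ j ih =>
        have : y (a + (j + 1)) - y a = (y ((a + j) + 1) - y (a + j)) + (y (a + j) - y a) := by
          ring_nf
        rw [this]
        calc |(y ((a + j) + 1) - y (a + j)) + (y (a + j) - y a)|
            ≤ |y ((a + j) + 1) - y (a + j)| + |y (a + j) - y a| := abs_add_le _ _
          _ ≤ E + j * E := add_le_add (hstep _) ih
          _ = (j + 1 : ℕ) * E := by push_cast; ring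
  have key : ∀ n : ℕ, 0 ≤ b * (n : ℤ) + k →
      x (b * (n : ℤ) + k).toNat - (b * n : ℝ) * ρ = y (b * (n : ℤ) + k).toNat + (k : ℝ) * ρ := by
    intro n hn
    have hcast : (((b * (n : ℤ) + k).toNat : ℕ) : ℝ) = (b : ℝ) * n + k := by
      have := Int.toNat_of_nonneg hn
      ring_nf
      exact_mod_cast congrArg (fun z : ℤ => (z : ℝ)) this
    simp only [hy]
    rw [hcast]; ring
  rw [aux_limsup_top_iff, aux_limsup_top_iff]
  constructor
  · -- subsequence unbounded → whole sequence unbounded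
    intro h M
    rw [frequently_atTop]
    intro N
    obtain ⟨n, hn, hval⟩ := frequently_atTop.1 (h (M + k * ρ)) (N + k.natAbs)
    have hn0 : 0 ≤ b * (n : ℤ) + k := by
      have h1 : (N : ℤ) + k.natAbs ≤ (n : ℤ) := by exact_mod_cast hn
      have h2 : (n : ℤ) ≤ b * n := le_mul_of_one_le_left (Int.ofNat_nonneg n) hb
      have := neg_abs_le k
      omega
    have hbig : (N : ℤ) ≤ b * (n : ℤ) + k := by
      have h1 : (N : ℤ) + k.natAbs ≤ (n : ℤ) := by exact_mod_cast hn
      have h2 : (n : ℤ) ≤ b * n := le_mul_of_one_le_left (Int.ofNat_nonneg n) hb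
      have := neg_abs_le k
      omega
    refine ⟨(b * (n : ℤ) + k).toNat, ?_, ?_⟩
    · omega
    · have hyr : y (b * (n : ℤ) + k).toNat
          = x (b * (n : ℤ) + k).toNat - (((b * (n : ℤ) + k).toNat : ℕ) : ℝ) * ρ := rfl
      linarith [hval, hyr, key n hn0]
  · -- whole sequence unbounded → subsequence unbounded
    intro h M
    rw [frequently_atTop]
    intro N
    set N₁ : ℕ := b.toNat * N + b.toNat + k.natAbs with hN₁
    obtain ⟨m, hm, hym⟩ := frequently_atTop.1 (h (M - k * ρ + b * E)) N₁
    set q : ℤ := ((m : ℤ) - k) / b with hq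
    set r : ℤ := ((m : ℤ) - k) % b with hr
    have hb0 : (0 : ℤ) < b := by omega
    have hdiv : b * q + r = (m : ℤ) - k := Int.mul_ediv_add_emod _ _
    have hr0 : 0 ≤ r := Int.emod_nonneg _ (by omega)
    have hrb : r < b := Int.emod_lt_of_pos _ hb0
    have hmN : (N₁ : ℤ) ≤ (m : ℤ) := by exact_mod_cast hm
    have hbt : (b.toNat : ℤ) = b := Int.toNat_of_nonneg (by omega)
    have hN₁z : (N₁ : ℤ) = b * N + b + k.natAbs := by push_cast [hN₁, hbt]; ring
    have habs := neg_abs_le k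
    have habs' := le_abs_self k
    have hqN : (N : ℤ) < q := by
      have hbq : b * N < b * q := by omega
      exact lt_of_mul_lt_mul_left hbq (by omega)
    have hq0 : 0 ≤ q := by omega
    have hp0 : 0 ≤ b * q + k := by omega
    set p : ℕ := (b * q + k).toNat with hp
    have hpz : (p : ℤ) = b * q + k := Int.toNat_of_nonneg hp0
    have hmp : m = p + r.toNat := by omega
    have hdist : |y m - y p| ≤ (b : ℝ) * E := by
      rw [hmp]
      calc |y (p + r.toNat) - y p| ≤ (r.toNat : ℝ) * E := htel p r.toNat
        _ ≤ (b : ℝ) * E := by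
            apply mul_le_mul_of_nonneg_right _ hE0.le
            exact_mod_cast (by omega : (r.toNat : ℤ) ≤ b)
    have hym' : M - k * ρ + b * E ≤ y m := hym
    have hyp : M - k * ρ ≤ y p := by
      have h1 : y m - y p ≤ (b : ℝ) * E := le_of_abs_le hdist
      linarith
    refine ⟨q.toNat, by omega, ?_⟩
    have hqt : ((q.toNat : ℕ) : ℤ) = q := Int.toNat_of_nonneg hq0
    have hkey := key q.toNat (by rw [hqt]; exact hp0)
    rw [show (b * ((q.toNat : ℕ) : ℤ) + k) = b * q + k from by rw [hqt], ← hp] at hkey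
    rw [show (b * ((q.toNat : ℕ) : ℤ) + k) = b * q + k from by rw [hqt], ← hp]
    linarith [hyp, hkey]
end

section
/- Let b ≥ 1 and k be integers, ρ a real number, and (x_n)_{n≥0} a sequence of real numbers with uniformly bounded increments (∃ D, ∀ n, |x_{n+1} - x_n| ≤ D). Then limsup_{n→+∞} x_{bn+k}/n > bρ if and only if limsup_{n→+∞} x_n/n > ρ. -/
open Filter

private lemma chain_bound (x : ℕ → ℝ) (D : ℝ) (h : ∀ n, |x (n + 1) - x n| ≤ D) :
    ∀ (q t : ℕ), |x (q + t) - x q| ≤ t * D := by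
  intro q t
  induction t with
  | zero => simp
  | succ t ih =>
    have hidx : q + (t + 1) = q + t + 1 := by omega
    rw [hidx]
    have h1 := h (q + t)
    have h2 : |x (q + t + 1) - x q| ≤ |x (q + t + 1) - x (q + t)| + |x (q + t) - x q| := by
      have e : x (q + t + 1) - x q = (x (q + t + 1) - x (q + t)) + (x (q + t) - x q) := by ring
      rw [e]; exact abs_add_le _ _
    push_cast
    linarith

set_option maxHeartbeats 1600000 in
/-- Abstract version of the second equivalence in Lemma 7.2:
`limsup x_{bn+k}/n > bρ` iff `limsup x_n/n > ρ`. -/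
theorem stmt1 (b k : ℤ) (hb : 1 ≤ b) (ρ : ℝ) (x : ℕ → ℝ)
    (hD : ∃ D : ℝ, 0 < D ∧ ∀ n : ℕ, |x (n + 1) - x n| ≤ D) :
    limsup (fun n : ℕ => x (b * n + k).toNat / (n : ℝ)) atTop > (b : ℝ) * ρ ↔
    limsup (fun n : ℕ => x n / (n : ℝ)) atTop > ρ := by
  obtain ⟨D, hD0, hstep⟩ := hD
  set f : ℕ → ℝ := fun n : ℕ => x n / (n : ℝ) with hf
  set g : ℕ → ℝ := fun n : ℕ => x (b * n + k).toNat / (n : ℝ) with hg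
  obtain ⟨K, hK⟩ : ∃ K : ℕ, (K : ℤ) = k.natAbs := ⟨k.natAbs, rfl⟩
  have hbR : (1 : ℝ) ≤ (b : ℝ) := by exact_mod_cast hb
  have habs : ∀ n : ℕ, |x n| ≤ |x 0| + n * D := by
    intro n
    have := chain_bound x D hstep 0 n
    simp only [Nat.zero_add] at this
    have h2 := abs_sub_abs_le_abs_sub (x n) (x 0)
    linarith
  have hbn : ∀ n : ℕ, (n : ℤ) ≤ b * n :=
    fun n => le_mul_of_one_le_left (Int.ofNat_nonneg n) hb
  -- bound on f
  have hfbd : ∀ n : ℕ, |f n| ≤ |x 0| + D := by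
    intro n
    rcases Nat.eq_zero_or_pos n with h0 | h1
    · subst h0; simp [hf]; positivity
    · have hn1 : (1 : ℝ) ≤ (n : ℝ) := by exact_mod_cast h1
      have hn0 : (0 : ℝ) < (n : ℝ) := by linarith
      have := habs n
      rw [hf, abs_div, abs_of_pos hn0, div_le_iff₀ hn0]
      nlinarith [abs_nonneg (x 0)]
  -- bound on g
  have hgbd : ∀ n : ℕ, |g n| ≤ |x 0| + (K : ℝ) * D + (b : ℝ) * D := by
    intro n
    rcases Nat.eq_zero_or_pos n with h0 | h1
    · subst h0; simp [hg]; positivity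
    · have hn1 : (1 : ℝ) ≤ (n : ℝ) := by exact_mod_cast h1
      have hn0 : (0 : ℝ) < (n : ℝ) := by linarith
      set m : ℕ := (b * n + k).toNat with hm
      have hbn' := hbn n
      have hmle : (m : ℤ) ≤ b * n + K := by omega
      have hmleR : (m : ℝ) ≤ (b : ℝ) * n + (K : ℝ) := by exact_mod_cast hmle
      have h2 := habs m
      have hm0 : (0 : ℝ) ≤ (m : ℝ) := by positivity
      have hK0 : (0 : ℝ) ≤ (K : ℝ) := by positivity
      rw [hg, abs_div, abs_of_pos hn0, div_le_iff₀ hn0]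
      have e1 : (0 : ℝ) ≤ ((n : ℝ) - 1) * |x 0| := by
        apply mul_nonneg (by linarith) (abs_nonneg _)
      have e2 : (0 : ℝ) ≤ ((n : ℝ) - 1) * ((K : ℝ) * D) := by
        apply mul_nonneg (by linarith) (by positivity)
      have e3 : (m : ℝ) * D ≤ ((b : ℝ) * n + K) * D :=
        mul_le_mul_of_nonneg_right hmleR hD0.le
      nlinarith
  have hfbd_le : IsBoundedUnder (· ≤ ·) atTop f :=
    isBoundedUnder_of ⟨|x 0| + D, fun n => (abs_le.mp (hfbd n)).2⟩
  have hfbd_ge : IsBoundedUnder (· ≥ ·) atTop f :=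
    isBoundedUnder_of ⟨-(|x 0| + D), fun n => (abs_le.mp (hfbd n)).1⟩
  have hgbd_le : IsBoundedUnder (· ≤ ·) atTop g :=
    isBoundedUnder_of ⟨|x 0| + (K : ℝ) * D + (b : ℝ) * D, fun n => (abs_le.mp (hgbd n)).2⟩
  have hgbd_ge : IsBoundedUnder (· ≥ ·) atTop g :=
    isBoundedUnder_of ⟨-(|x 0| + (K : ℝ) * D + (b : ℝ) * D), fun n => (abs_le.mp (hgbd n)).1⟩
  have hfco : IsCoboundedUnder (· ≤ ·) atTop f := hfbd_ge.isCoboundedUnder_le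
  have hgco : IsCoboundedUnder (· ≤ ·) atTop g := hgbd_ge.isCoboundedUnder_le
  constructor
  · -- limsup g > bρ → limsup f > ρ
    intro h
    by_contra h'
    push_neg at h'
    obtain ⟨c, hc1, hc2⟩ : ∃ c, (b : ℝ) * ρ < c ∧ c < limsup g atTop :=
      ⟨((b : ℝ) * ρ + limsup g atTop) / 2, by linarith, by linarith⟩
    obtain ⟨δ, hδ, hcval⟩ : ∃ δ : ℝ, 0 < δ ∧ (b : ℝ) * ρ + 2 * (b : ℝ) * δ ≤ c := by
      refine ⟨(c - (b : ℝ) * ρ) / (2 * (b : ℝ)), div_pos (by linarith) (by linarith), ?_⟩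
      have hbne : (2 : ℝ) * (b : ℝ) ≠ 0 := by positivity
      rw [mul_div_cancel₀ _ hbne]
      linarith
    have hLδ : limsup f atTop < ρ + δ := lt_of_le_of_lt h' (by linarith)
    have heav := eventually_lt_of_limsup_lt hLδ hfbd_le
    rw [eventually_atTop] at heav
    obtain ⟨N, hN⟩ := heav
    obtain ⟨A, hA⟩ : ∃ A : ℝ, A = |(ρ + δ) * (k : ℝ)| := ⟨_, rfl⟩
    have hev : ∀ᶠ n : ℕ in atTop, g n ≤ c := by
      rw [eventually_atTop]
      refine ⟨N + K + ⌈A / ((b : ℝ) * δ)⌉₊ + 1, fun n hn => ?_⟩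
      have hn1 : 1 ≤ n := by omega
      have hnN : N + K + 1 ≤ n := by omega
      have hnceil : ⌈A / ((b : ℝ) * δ)⌉₊ ≤ n := by omega
      have hn0 : (0 : ℝ) < (n : ℝ) := by exact_mod_cast Nat.pos_of_ne_zero (by omega)
      set m : ℕ := (b * n + k).toNat with hm
      have hbn' := hbn n
      have hmZ : (m : ℤ) = b * n + k := by omega
      have hmge : N ≤ m := by omega
      have hm1 : 1 ≤ m := by omega
      have hm0 : (0 : ℝ) < (m : ℝ) := by exact_mod_cast Nat.pos_of_ne_zero (by omega)
      have hfm := hN m hmge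
      have hxm : x m ≤ (ρ + δ) * m := by
        rw [hf] at hfm
        have := (div_lt_iff₀ hm0).mp hfm
        linarith
      have hmR : (m : ℝ) = (b : ℝ) * n + (k : ℝ) := by exact_mod_cast hmZ
      have hAn : A ≤ (n : ℝ) * ((b : ℝ) * δ) := by
        have h1 : A / ((b : ℝ) * δ) ≤ (⌈A / ((b : ℝ) * δ)⌉₊ : ℝ) := Nat.le_ceil _
        have h2 : ((⌈A / ((b : ℝ) * δ)⌉₊ : ℕ) : ℝ) ≤ (n : ℝ) := by exact_mod_cast hnceil
        have hbδ : (0 : ℝ) < (b : ℝ) * δ := by positivity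
        rw [div_le_iff₀ hbδ] at h1
        nlinarith
      have hAabs : (ρ + δ) * (k : ℝ) ≤ A := by rw [hA]; exact le_abs_self _
      show x m / (n : ℝ) ≤ c
      rw [div_le_iff₀ hn0]
      have hbδn : (0 : ℝ) ≤ (b : ℝ) * δ * n := by positivity
      have hxm2 : x m ≤ (ρ + δ) * ((b : ℝ) * n) + (ρ + δ) * (k : ℝ) := by
        rw [hmR] at hxm; linarith [hxm]
      nlinarith [hn0.le]
    have : limsup g atTop ≤ c := limsup_le_of_le hgco hev
    linarith
  · -- limsup f > ρ → limsup g > bρ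
    intro h
    obtain ⟨c, hc1, hc2⟩ : ∃ c, ρ < c ∧ c < limsup f atTop :=
      ⟨(ρ + limsup f atTop) / 2, by linarith, by linarith⟩
    have hfreq := frequently_lt_of_lt_limsup hfco hc2
    obtain ⟨C, hC⟩ : ∃ C : ℝ, C = c * (k : ℝ) - |c| * ((b : ℝ) - 1) - ((b : ℝ) - 1) * D :=
      ⟨_, rfl⟩
    obtain ⟨ε, hε0, hεval⟩ : ∃ ε : ℝ, 0 < ε ∧ ε = (b : ℝ) * (c - ρ) / 2 :=
      ⟨_, div_pos (mul_pos (by linarith) (by linarith)) two_pos, rfl⟩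
    have hfr2 : ∃ᶠ n : ℕ in atTop, (b : ℝ) * c - ε ≤ g n := by
      rw [frequently_atTop] at hfreq ⊢
      intro N
      obtain ⟨N1, hN1⟩ : ∃ N1 : ℕ, N1 = N + ⌈|C| / ε⌉₊ + 1 := ⟨_, rfl⟩
      obtain ⟨m, hm, hcm⟩ := hfreq (b.toNat * N1 + K + b.toNat + 1)
      have hBZ : ((b.toNat : ℕ) : ℤ) = b := Int.toNat_of_nonneg (by omega)
      have hmlarge : b * (N1 : ℤ) + K + b + 1 ≤ (m : ℤ) := by
        have h1 : ((b.toNat * N1 + K + b.toNat + 1 : ℕ) : ℤ) ≤ (m : ℤ) := by exact_mod_cast hm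
        push_cast at h1
        rw [hBZ] at h1
        linarith
      have hbN1 : (N1 : ℤ) ≤ b * (N1 : ℤ) := le_mul_of_one_le_left (Int.ofNat_nonneg N1) hb
      have hm1 : 1 ≤ m := by omega
      have hm0 : (0 : ℝ) < (m : ℝ) := by exact_mod_cast Nat.pos_of_ne_zero (by omega)
      have hxm : c * m < x m := by
        rw [hf] at hcm
        have := (lt_div_iff₀ hm0).mp hcm
        linarith
      obtain ⟨q, r, hr0, hrb, heq⟩ :
          ∃ q r : ℤ, 0 ≤ r ∧ r < b ∧ b * q + r = (m : ℤ) - k + (b - 1) :=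
        ⟨_, _, Int.emod_nonneg _ (by omega), Int.emod_lt_of_pos _ (by omega),
          Int.mul_ediv_add_emod _ b⟩
      have hle1 : (m : ℤ) ≤ b * q + k := by omega
      have hle2 : b * q + k ≤ (m : ℤ) + (b - 1) := by omega
      have hq1 : (N1 : ℤ) < q := by
        by_contra hcon
        push_neg at hcon
        have hbq : b * q ≤ b * (N1 : ℤ) := mul_le_mul_of_nonneg_left hcon (by omega)
        omega
      have hq0 : 0 ≤ q := by omega
      obtain ⟨n, hnq⟩ : ∃ n : ℕ, (n : ℤ) = q := ⟨q.toNat, Int.toNat_of_nonneg hq0⟩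
      have hnN1 : N1 < n := by omega
      have hnN : N ≤ n := by omega
      have hn0 : (0 : ℝ) < (n : ℝ) := by exact_mod_cast Nat.pos_of_ne_zero (by omega)
      refine ⟨n, hnN, ?_⟩
      set p : ℕ := (b * n + k).toNat with hp
      have hbnq : b * (n : ℤ) = b * q := by rw [hnq]
      have hpZ : (p : ℤ) = b * q + k := by omega
      have hmp : m ≤ p := by omega
      have hpmb : ((p - m : ℕ) : ℝ) ≤ (b : ℝ) - 1 := by
        have h2 : ((p - m : ℕ) : ℤ) ≤ b - 1 := by omega
        have h3 : (((p - m : ℕ) : ℤ) : ℝ) ≤ ((b : ℤ) : ℝ) - 1 := by exact_mod_cast h2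
        exact_mod_cast h3
      have hchain := chain_bound x D hstep m (p - m)
      rw [Nat.add_sub_cancel' hmp] at hchain
      have hxp : x m - ((b : ℝ) - 1) * D ≤ x p := by
        have h1 : x m - x p ≤ ((p - m : ℕ) : ℝ) * D := by
          have h2 := abs_le.mp hchain
          linarith
        have h4 : ((p - m : ℕ) : ℝ) * D ≤ ((b : ℝ) - 1) * D :=
          mul_le_mul_of_nonneg_right hpmb hD0.le
        linarith
      have hmR1 : (m : ℝ) ≤ (b : ℝ) * n + (k : ℝ) := by
        have : ((m : ℤ) : ℝ) ≤ ((b * q + k : ℤ) : ℝ) := by exact_mod_cast hle1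
        push_cast [← hnq] at this
        linarith
      have hmR2 : (b : ℝ) * n + (k : ℝ) ≤ (m : ℝ) + ((b : ℝ) - 1) := by
        have : ((b * q + k : ℤ) : ℝ) ≤ ((m : ℤ) : ℝ) + (((b : ℤ) : ℝ) - 1) := by
          exact_mod_cast hle2
        push_cast [← hnq] at this
        linarith
      have hcm2 : c * ((b : ℝ) * n + (k : ℝ)) - |c| * ((b : ℝ) - 1) ≤ c * m := by
        rcases abs_cases c with ⟨h1, h2⟩ | ⟨h1, h2⟩
        · have := mul_le_mul_of_nonneg_left
            (show (b : ℝ) * n + (k : ℝ) - m ≤ (b : ℝ) - 1 by linarith) h2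
          rw [h1]
          linarith
        · have := mul_le_mul_of_nonpos_left hmR1 (le_of_lt h2)
          have habs0 : 0 ≤ |c| := abs_nonneg c
          nlinarith
      have hxp2 : c * (b : ℝ) * n + C ≤ x p := by
        rw [hC]
        linarith
      show (b : ℝ) * c - ε ≤ x p / (n : ℝ)
      rw [le_div_iff₀ hn0]
      have hCn : |C| ≤ ε * n := by
        have h1 : |C| / ε ≤ (⌈|C| / ε⌉₊ : ℝ) := Nat.le_ceil _
        have h2 : ((⌈|C| / ε⌉₊ : ℕ) : ℝ) ≤ (n : ℝ) := by
          have : ⌈|C| / ε⌉₊ ≤ n := by omega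
          exact_mod_cast this
        rw [div_le_iff₀ hε0] at h1
        nlinarith
      have hnegC : -C ≤ ε * n := le_trans (neg_le_abs C) hCn
      nlinarith [hxp2]
    have hge := le_limsup_of_frequently_le hfr2 hgbd_le
    have hbc : (b : ℝ) * c - ε = (b : ℝ) * (c + ρ) / 2 := by rw [hεval]; ring
    rw [hbc] at hge
    have hlt : (b : ℝ) * ρ < (b : ℝ) * (c + ρ) / 2 := by nlinarith
    linarith
end

section
/- Let (r_n)_{n≥0} be a real sequence with r_0 = −1 and r_{n+1} = r_n + r_n/(n(r_n² + 1)) for all n ≥ 1, and r_1 ≤ −1. Then r_n → −∞ as n → +∞. -/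
open Filter Finset

/-- Claim in Theorem 8.2: the recursively defined radial coordinates `r_{n+1} = r_n +
r_n/(n(r_n² + 1))` with `r_0 = -1`, `r_1 ≤ -1` tend to `-∞`. -/
theorem stmt17 (r : ℕ → ℝ) (h0 : r 0 = -1) (h1 : r 1 ≤ -1)
    (hrec : ∀ n : ℕ, 1 ≤ n → r (n + 1) = r n + r n / ((n : ℝ) * (r n ^ 2 + 1))) :
    Tendsto r atTop atBot := by
  have hle : ∀ n : ℕ, 1 ≤ n → r n ≤ -1 := by
    intro n hn
    induction n with
    | zero => omega
    | succ m ih =>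
      rcases Nat.lt_or_ge m 1 with h | h
      · interval_cases m
        exact h1
      · have hm := ih h
        have hd : (0:ℝ) < (m : ℝ) * (r m ^ 2 + 1) := by
          have : (1:ℝ) ≤ (m:ℝ) := by exact_mod_cast h
          nlinarith [sq_nonneg (r m)]
        have hneg : r m / ((m : ℝ) * (r m ^ 2 + 1)) ≤ 0 :=
          div_nonpos_of_nonpos_of_nonneg (by linarith) hd.le
        rw [hrec m h]
        linarith
  have hsq : ∀ n : ℕ, 1 ≤ n → r n ^ 2 + 1 / (n : ℝ) ≤ r (n + 1) ^ 2 := by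
    intro n hn
    have hm := hle n hn
    have hn1 : (1:ℝ) ≤ (n:ℝ) := by exact_mod_cast hn
    set d : ℝ := (n : ℝ) * (r n ^ 2 + 1) with hdre
    have hd : (0:ℝ) < d := by nlinarith [sq_nonneg (r n)]
    set q : ℝ := r n / d with hqre
    have hq : q * d = r n := div_mul_cancel₀ _ hd.ne'
    have hq2 : q ^ 2 * d ^ 2 = r n ^ 2 := by rw [← hq]; ring
    have hn0 : (n:ℝ) ≠ 0 := by linarith
    have hud : (1 / (n:ℝ)) * d = r n ^ 2 + 1 := by
      rw [hdre]; field_simp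
    rw [hrec n hn, ← hqre]
    nlinarith [hq2, hud, hd, sq_nonneg q, mul_nonneg (mul_nonneg (sq_nonneg q) hd.le) hd.le,
      mul_nonneg (sq_nonneg q) hd.le, hm]
  -- harmonic lower bound
  have hsum : ∀ n : ℕ, 1 + ∑ k ∈ range n, 1 / ((k:ℝ) + 1) ≤ r (n + 1) ^ 2 := by
    intro n
    induction n with
    | zero => rw [Finset.range_zero, Finset.sum_empty]; nlinarith [h1]
    | succ m ih =>
      have h2 := hsq (m + 1) (by omega)
      rw [Finset.sum_range_succ]
      push_cast at h2 ⊢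
      linarith
  rw [tendsto_atBot]
  intro b
  have hb' : min b (-1) ≤ b := min_le_left _ _
  set c : ℝ := min b (-1) with hc
  have hc1 : c ≤ -1 := min_le_right _ _
  have hH : Tendsto (fun n => ∑ i ∈ range n, 1 / ((i:ℝ) + 1)) atTop atTop := by
    exact_mod_cast Real.tendsto_sum_range_one_div_nat_succ_atTop
  have : ∀ᶠ n in atTop, c ^ 2 ≤ 1 + ∑ i ∈ range n, 1 / ((i:ℝ) + 1) := by
    filter_upwards [hH.eventually_ge_atTop (c ^ 2)] with n hn
    linarith
  rw [eventually_atTop] at this ⊢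
  obtain ⟨N, hN⟩ := this
  refine ⟨N + 1, fun n hn => ?_⟩
  obtain ⟨m, rfl⟩ : ∃ m, n = m + 1 := ⟨n - 1, by omega⟩
  have h2 : c ^ 2 ≤ r (m + 1) ^ 2 := le_trans (hN m (by omega)) (hsum m)
  have h3 : r (m + 1) ≤ -1 := hle _ (by omega)
  nlinarith
end
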